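/- On the Bloch sphere for a single qubit, let |w⟩ have Bloch vector (sinθ cosφ, sinθ sinφ, cosθ) with 0 ≤ θ ≤ arccos(1/√3), 0 ≤ φ ≤ π/2 (so the closest pure stabilizer state is |0⟩). Let n = (sinφ, −cosφ, 0), U₁ = R_n(θ), U₂ = R_n(θ+π) where R_n(α) = exp(−i(α/2) n·σ). Then ½|⟨+|U₁|+⟩|² + ½|⟨−|U₂|+⟩|² = ½(1 + cos²φ cosθ) ≤ ½(1 + cosθ) = |⟨0|w⟩|². -/

import Mathlib

open Matrix

noncomputable section

def sigmaX : Matrix (Fin 2) (Fin 2) ℂ := !![0, 1; 1, 0]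
def sigmaY : Matrix (Fin 2) (Fin 2) ℂ := !![0, -Complex.I; Complex.I, 0]
def sigmaZ : Matrix (Fin 2) (Fin 2) ℂ := !![1, 0; 0, -1]

/-- Rotation by angle `α` about the unit axis `n = (n₁, n₂, n₃)`:
`R_n(α) = exp(−i(α/2) n·σ)`. -/
def rot (n : ℝ × ℝ × ℝ) (α : ℝ) : Matrix (Fin 2) (Fin 2) ℂ :=
  NormedSpace.exp ((-(α / 2 : ℝ) * Complex.I) •
    ((n.1 : ℂ) • sigmaX + (n.2.1 : ℂ) • sigmaY + (n.2.2 : ℂ) • sigmaZ))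

/-- The transition amplitude `⟨u|M|v⟩`. -/
def amp (u : Fin 2 → ℂ) (M : Matrix (Fin 2) (Fin 2) ℂ) (v : Fin 2 → ℂ) : ℂ :=
  ∑ a, ∑ b, (starRingEnd ℂ) (u a) * M a b * v b

def ket0 : Fin 2 → ℂ := ![1, 0]
def ketPlus : Fin 2 → ℂ := ![(1 / Real.sqrt 2 : ℝ), (1 / Real.sqrt 2 : ℝ)]
def ketMinus : Fin 2 → ℂ := ![(1 / Real.sqrt 2 : ℝ), -(1 / Real.sqrt 2 : ℝ)]

private lemma diag2 (a b : ℂ) : Matrix.diagonal ![a, b] = !![a, 0; 0, b] := by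
  ext i j
  fin_cases i <;> fin_cases j <;> simp [Matrix.diagonal_apply]

private lemma exp_neg_I (x : ℝ) :
    NormedSpace.exp (-(x : ℂ) * Complex.I) =
      (Real.cos x : ℂ) - (Real.sin x : ℂ) * Complex.I := by
  rw [← Complex.exp_eq_exp_ℂ,
    show (-(x : ℂ)) * Complex.I = ((-x : ℝ) : ℂ) * Complex.I by push_cast; ring,
    Complex.exp_mul_I, ← Complex.ofReal_cos, ← Complex.ofReal_sin, Real.cos_neg, Real.sin_neg]
  push_cast
  ring

private lemma exp_pos_I (x : ℝ) :
    NormedSpace.exp ((x : ℂ) * Complex.I) =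
      (Real.cos x : ℂ) + (Real.sin x : ℂ) * Complex.I := by
  rw [← Complex.exp_eq_exp_ℂ, Complex.exp_mul_I]
  rw [← Complex.ofReal_cos, ← Complex.ofReal_sin]

lemma rot_eq (φ α : ℝ) :
    rot (Real.sin φ, -Real.cos φ, 0) α =
      !![(Real.cos (α/2) : ℂ),
         -Complex.I * (Real.sin (α/2) : ℂ) * ((Real.sin φ : ℂ) + (Real.cos φ : ℂ) * Complex.I);
         -Complex.I * (Real.sin (α/2) : ℂ) * ((Real.sin φ : ℂ) - (Real.cos φ : ℂ) * Complex.I),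
         (Real.cos (α/2) : ℂ)] := by
  have h1 : ((Real.sin φ : ℂ))^2 + ((Real.cos φ : ℂ))^2 = 1 := by
    exact_mod_cast congrArg (fun x : ℝ => (x : ℂ)) (Real.sin_sq_add_cos_sq φ)
  have hI2 : Complex.I ^ 2 = -1 := Complex.I_sq
  have hPQ : (!![1, 1; (Real.sin φ : ℂ) - (Real.cos φ : ℂ) * Complex.I,
        -((Real.sin φ : ℂ) - (Real.cos φ : ℂ) * Complex.I)] : Matrix (Fin 2) (Fin 2) ℂ) *
      !![1/2, ((Real.sin φ : ℂ) + (Real.cos φ : ℂ) * Complex.I)/2;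
         1/2, -(((Real.sin φ : ℂ) + (Real.cos φ : ℂ) * Complex.I)/2)] = 1 := by
    rw [Matrix.mul_fin_two, Matrix.one_fin_two]
    ext i j
    fin_cases i <;> fin_cases j <;> simp <;>
      first
        | ring1
        | linear_combination Complex.sin_sq_add_cos_sq (φ:ℂ) - (Complex.cos (φ:ℂ))^2 * hI2
        | linear_combination -Complex.sin_sq_add_cos_sq (φ:ℂ) + (Complex.cos (φ:ℂ))^2 * hI2
  have hUnit : IsUnit (!![1, 1; (Real.sin φ : ℂ) - (Real.cos φ : ℂ) * Complex.I,
      -((Real.sin φ : ℂ) - (Real.cos φ : ℂ) * Complex.I)] : Matrix (Fin 2) (Fin 2) ℂ) := by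
    apply (Matrix.isUnit_iff_isUnit_det _).mpr
    apply IsUnit.of_mul_eq_one
      (!![1/2, ((Real.sin φ : ℂ) + (Real.cos φ : ℂ) * Complex.I)/2;
          1/2, -(((Real.sin φ : ℂ) + (Real.cos φ : ℂ) * Complex.I)/2)] :
        Matrix (Fin 2) (Fin 2) ℂ).det
    rw [← Matrix.det_mul, hPQ, Matrix.det_one]
  have hPinv : (!![1, 1; (Real.sin φ : ℂ) - (Real.cos φ : ℂ) * Complex.I,
        -((Real.sin φ : ℂ) - (Real.cos φ : ℂ) * Complex.I)] : Matrix (Fin 2) (Fin 2) ℂ)⁻¹ =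
      !![1/2, ((Real.sin φ : ℂ) + (Real.cos φ : ℂ) * Complex.I)/2;
         1/2, -(((Real.sin φ : ℂ) + (Real.cos φ : ℂ) * Complex.I)/2)] :=
    Matrix.inv_eq_right_inv hPQ
  have key : (-(α / 2 : ℝ) * Complex.I) •
      (((Real.sin φ : ℂ)) • sigmaX + ((-Real.cos φ : ℝ) : ℂ) • sigmaY + ((0:ℝ) : ℂ) • sigmaZ) =
      !![1, 1; (Real.sin φ : ℂ) - (Real.cos φ : ℂ) * Complex.I,
         -((Real.sin φ : ℂ) - (Real.cos φ : ℂ) * Complex.I)] *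
        Matrix.diagonal ![-((α/2 : ℝ) : ℂ) * Complex.I, ((α/2 : ℝ) : ℂ) * Complex.I] *
        !![1/2, ((Real.sin φ : ℂ) + (Real.cos φ : ℂ) * Complex.I)/2;
           1/2, -(((Real.sin φ : ℂ) + (Real.cos φ : ℂ) * Complex.I)/2)] := by
    rw [diag2, Matrix.mul_fin_two, Matrix.mul_fin_two]
    ext i j
    fin_cases i <;> fin_cases j <;>
      simp [sigmaX, sigmaY, sigmaZ] <;> ring1
  have hexp : NormedSpace.exp
      (Matrix.diagonal ![-((α/2 : ℝ) : ℂ) * Complex.I, ((α/2 : ℝ) : ℂ) * Complex.I]) =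
      !![(Real.cos (α/2) : ℂ) - (Real.sin (α/2) : ℂ) * Complex.I, 0;
         0, (Real.cos (α/2) : ℂ) + (Real.sin (α/2) : ℂ) * Complex.I] := by
    rw [Matrix.exp_diagonal, Pi.exp_def]
    rw [show (fun i => NormedSpace.exp
        ((![-((α/2 : ℝ) : ℂ) * Complex.I, ((α/2 : ℝ) : ℂ) * Complex.I]) i)) =
      ![(Real.cos (α/2) : ℂ) - (Real.sin (α/2) : ℂ) * Complex.I,
        (Real.cos (α/2) : ℂ) + (Real.sin (α/2) : ℂ) * Complex.I] from ?_, diag2]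
    funext i
    fin_cases i
    · simpa using exp_neg_I (α/2)
    · simpa using exp_pos_I (α/2)
  rw [rot]
  simp only [show ((-Real.cos φ : ℝ) : ℂ) = -((Real.cos φ : ℝ) : ℂ) by push_cast; ring] at key
  rw [show ((Real.sin φ, -Real.cos φ, (0:ℝ)).1 : ℂ) = (Real.sin φ : ℂ) from rfl]
  rw [show (((Real.sin φ, -Real.cos φ, (0:ℝ)).2.1 : ℝ) : ℂ) = -((Real.cos φ : ℝ) : ℂ) by
    push_cast; ring]
  rw [show (((Real.sin φ, -Real.cos φ, (0:ℝ)).2.2 : ℝ) : ℂ) = ((0 : ℝ) : ℂ) from rfl]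
  rw [key, ← hPinv, Matrix.exp_conj _ _ hUnit, hPinv, hexp]
  rw [Matrix.mul_fin_two, Matrix.mul_fin_two]
  ext i j
  fin_cases i <;> fin_cases j <;> simp <;>
    first
      | ring1
      | linear_combination Complex.cos ((α:ℂ)/2) * Complex.sin_sq_add_cos_sq (φ:ℂ)
          - Complex.cos ((α:ℂ)/2) * (Complex.cos (φ:ℂ))^2 * hI2

private lemma sqrt2_sq : ((Real.sqrt 2 : ℝ) : ℂ) * ((Real.sqrt 2 : ℝ) : ℂ) = 2 := by
  norm_cast
  exact Real.mul_self_sqrt (by norm_num)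

private lemma sqrt2_ne : ((Real.sqrt 2 : ℝ) : ℂ) ≠ 0 := by
  simp [Real.sqrt_eq_zero']

private lemma inv_sqrt2 : ((1 / Real.sqrt 2 : ℝ) : ℂ) = ((Real.sqrt 2 : ℝ) : ℂ) / 2 := by
  norm_cast
  rw [div_eq_div_iff (by positivity) two_ne_zero, one_mul,
    Real.mul_self_sqrt (by norm_num : (0:ℝ) ≤ 2)]

private lemma amp_plus (M : Matrix (Fin 2) (Fin 2) ℂ) :
    amp ketPlus M ketPlus = (M 0 0 + M 0 1 + M 1 0 + M 1 1) / 2 := by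
  simp only [amp, ketPlus, Fin.sum_univ_two, Matrix.cons_val_zero, Matrix.cons_val_one,
    Matrix.head_cons, Complex.conj_ofReal]
  simp only [inv_sqrt2]
  linear_combination ((M 0 0 + M 0 1 + M 1 0 + M 1 1)/4) * sqrt2_sq

private lemma amp_minus (M : Matrix (Fin 2) (Fin 2) ℂ) :
    amp ketMinus M ketPlus = (M 0 0 + M 0 1 - M 1 0 - M 1 1) / 2 := by
  simp only [amp, ketMinus, ketPlus, Fin.sum_univ_two, Matrix.cons_val_zero, Matrix.cons_val_one,
    Matrix.head_cons, Complex.ofReal_neg, map_neg, Complex.conj_ofReal]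
  simp only [inv_sqrt2]
  linear_combination ((M 0 0 + M 0 1 - M 1 0 - M 1 1)/4) * sqrt2_sq

private lemma norm_add_mul_I_sq (x y : ℝ) :
    ‖(x : ℂ) + (y : ℂ) * Complex.I‖ ^ 2 = x ^ 2 + y ^ 2 := by
  rw [Complex.sq_norm, Complex.normSq_apply]
  simp
  ring

/-- The X-basis measurement check in the single-qubit magic discrimination
bound. -/
theorem magic_qubit_x_basis_check (θ φ : ℝ)
    (hθ0 : 0 ≤ θ) (hθ1 : θ ≤ Real.arccos (1 / Real.sqrt 3))
    (hφ0 : 0 ≤ φ) (hφ1 : φ ≤ Real.pi / 2) :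
    let n : ℝ × ℝ × ℝ := (Real.sin φ, -Real.cos φ, 0)
    let U₁ := rot n θ
    let U₂ := rot n (θ + Real.pi)
    let w : Fin 2 → ℂ := ![(Real.cos (θ / 2) : ℂ),
      Complex.exp (φ * Complex.I) * (Real.sin (θ / 2) : ℂ)]
    (1 / 2) * ‖amp ketPlus U₁ ketPlus‖ ^ 2
        + (1 / 2) * ‖amp ketMinus U₂ ketPlus‖ ^ 2
      = (1 / 2) * (1 + Real.cos φ ^ 2 * Real.cos θ) ∧
    (1 / 2) * (1 + Real.cos φ ^ 2 * Real.cos θ) ≤ (1 / 2) * (1 + Real.cos θ) ∧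
    (1 / 2) * (1 + Real.cos θ) = ‖∑ a, (starRingEnd ℂ) (ket0 a) * w a‖ ^ 2 := by
  intro n U₁ U₂ w
  have hθsq := Real.sin_sq_add_cos_sq (θ/2)
  have hφsq := Real.sin_sq_add_cos_sq φ
  have hC : Real.cos θ = Real.cos (θ/2)^2 - Real.sin (θ/2)^2 := by
    have := Real.cos_two_mul' (θ/2)
    rwa [show 2*(θ/2) = θ by ring] at this
  have z1 : amp ketPlus U₁ ketPlus =
      ((Real.cos (θ/2) : ℝ) : ℂ) + ((-(Real.sin φ * Real.sin (θ/2)) : ℝ) : ℂ) * Complex.I := by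
    show amp ketPlus (rot (Real.sin φ, -Real.cos φ, 0) θ) ketPlus = _
    rw [amp_plus, rot_eq]
    simp only [Matrix.cons_val', Matrix.cons_val_zero, Matrix.cons_val_one, Matrix.head_cons,
      Matrix.head_fin_const, Matrix.empty_val', Matrix.cons_val_fin_one, Matrix.of_apply]
    push_cast
    ring
  have hsin : Real.sin ((θ + Real.pi)/2) = Real.cos (θ/2) := by
    rw [show (θ + Real.pi)/2 = θ/2 + Real.pi/2 by ring, Real.sin_add_pi_div_two]
  have z2 : amp ketMinus U₂ ketPlus = ((Real.cos φ * Real.cos (θ/2) : ℝ) : ℂ) := by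
    show amp ketMinus (rot (Real.sin φ, -Real.cos φ, 0) (θ + Real.pi)) ketPlus = _
    rw [amp_minus, rot_eq, hsin]
    simp only [Matrix.cons_val', Matrix.cons_val_zero, Matrix.cons_val_one, Matrix.head_cons,
      Matrix.head_fin_const, Matrix.empty_val', Matrix.cons_val_fin_one, Matrix.of_apply,
      Complex.ofReal_mul]
    linear_combination -(((Real.cos φ : ℝ) : ℂ) * ((Real.cos (θ/2) : ℝ) : ℂ)) * Complex.I_sq
  refine ⟨?_, ?_, ?_⟩
  · rw [z1, z2, norm_add_mul_I_sq]
    rw [show (((Real.cos φ * Real.cos (θ/2) : ℝ)) : ℂ) =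
      ((Real.cos φ * Real.cos (θ/2) : ℝ) : ℂ) + ((0:ℝ) : ℂ) * Complex.I by push_cast; ring,
      norm_add_mul_I_sq]
    linear_combination (1/2) * hθsq + (Real.sin (θ/2)^2/2) * hφsq
      - (Real.cos φ^2/2) * hC
  · have hcos : 0 ≤ Real.cos θ := by
      apply Real.cos_nonneg_of_mem_Icc
      constructor
      · linarith [Real.pi_pos]
      · exact le_trans hθ1 (Real.arccos_le_pi_div_two.mpr (by positivity))
    nlinarith [sq_nonneg (Real.sin φ), hφsq]
  · have : ∑ a, (starRingEnd ℂ) (ket0 a) * w a = ((Real.cos (θ/2) : ℝ) : ℂ) := by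
      show ∑ a, (starRingEnd ℂ) (ket0 a) *
        (![(Real.cos (θ / 2) : ℂ),
          Complex.exp (φ * Complex.I) * (Real.sin (θ / 2) : ℂ)]) a = _
      simp [ket0, Fin.sum_univ_two]
    rw [this, show (((Real.cos (θ/2) : ℝ)) : ℂ) =
      ((Real.cos (θ/2) : ℝ) : ℂ) + ((0:ℝ) : ℂ) * Complex.I by push_cast; ring,
      norm_add_mul_I_sq]
    linear_combination (1/2) * hC + (1/2) * hθsq - hθsq

end
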